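/- Let k ≥ 2 be an integer and let 1 ≤ r ≤ r' be integers. Then every eigenvalue of the adjacency matrix of X_r^k is also an eigenvalue of the adjacency matrix of X_{r'}^k; that is, the spectrum of X_r^k is a subset of the spectrum of X_{r'}^k. -/

import Mathlib

open Polynomial

/-- Vertices of the rooted tree of depth `r` in which each vertex at depth `i < r`
has `b i` children: a vertex is a word assigning to each position `i < m ≤ r`
a letter in `Fin (b i)`; the empty word (`m = 0`) is the root, and the depth of a
vertex is its length `m`. -/
abbrev BVertex (b : ℕ → ℕ) (r : ℕ) := Σ m : Fin (r + 1), (i : Fin (m : ℕ)) → Fin (b i)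

/-- `y` is a child of `x`: the word `y` extends the word `x` by one letter. -/
def BExt {b : ℕ → ℕ} {r : ℕ} (x y : BVertex b r) : Prop :=
  ∃ h : (y.1 : ℕ) = (x.1 : ℕ) + 1,
    ∀ i : Fin (x.1 : ℕ), y.2 ⟨(i : ℕ), by have := i.isLt; omega⟩ = x.2 i

/-- Adjacency in the rooted tree: the parent/child relation. -/
def BAdj {b : ℕ → ℕ} {r : ℕ} (x y : BVertex b r) : Prop := BExt x y ∨ BExt y x

open Classical in
/-- Adjacency matrix of the rooted tree with branching sequence `b` and depth `r`. -/
noncomputable def BAdjMatrix (b : ℕ → ℕ) (r : ℕ) : Matrix (BVertex b r) (BVertex b r) ℝ :=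
  fun x y => if BAdj x y then 1 else 0

/-- `lam` is an eigenvalue of the adjacency matrix of the tree. -/
def IsAdjEigenvalue (b : ℕ → ℕ) (r : ℕ) (lam : ℝ) : Prop :=
  ∃ v : BVertex b r → ℝ, v ≠ 0 ∧ (BAdjMatrix b r).mulVec v = lam • v

/-- Dimension of the `lam`-eigenspace of the adjacency matrix of the tree. -/
noncomputable def adjEigDim (b : ℕ → ℕ) (r : ℕ) (lam : ℝ) : ℕ :=
  Module.finrank ℝ
    (LinearMap.ker ((BAdjMatrix b r).mulVecLin - lam • LinearMap.id))

section Aux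
variable {k r : ℕ}

def kpar (x : BVertex (fun _ => k) r) (_h : 0 < (x.1:ℕ)) : BVertex (fun _ => k) r :=
  ⟨⟨(x.1:ℕ) - 1, by have := x.1.isLt; omega⟩,
    fun i => x.2 ⟨i, by have h2 : (i:ℕ) < (x.1:ℕ) - 1 := i.isLt; omega⟩⟩

def kchi (x : BVertex (fun _ => k) r) (h : (x.1:ℕ) < r) (c : Fin k) : BVertex (fun _ => k) r :=
  ⟨⟨(x.1:ℕ) + 1, by omega⟩, fun i => if hi : (i:ℕ) < (x.1:ℕ) then x.2 ⟨i, hi⟩ else c⟩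

@[simp] lemma kpar_fst (x : BVertex (fun _ => k) r) (h : 0 < (x.1:ℕ)) :
    (((kpar x h).1 : Fin (r+1)) : ℕ) = (x.1:ℕ) - 1 := rfl

@[simp] lemma kchi_fst (x : BVertex (fun _ => k) r) (h : (x.1:ℕ) < r) (c : Fin k) :
    (((kchi x h c).1 : Fin (r+1)) : ℕ) = (x.1:ℕ) + 1 := rfl

lemma kpar_snd (x : BVertex (fun _ => k) r) (h : 0 < (x.1:ℕ)) (i : ℕ)
    (hi : i < (((kpar x h).1 : Fin (r+1)) : ℕ)) (hi' : i < (x.1:ℕ)) :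
    (kpar x h).2 ⟨i, hi⟩ = x.2 ⟨i, hi'⟩ := rfl

lemma kchi_snd (x : BVertex (fun _ => k) r) (h : (x.1:ℕ) < r) (c : Fin k) (i : ℕ)
    (hi : i < (((kchi x h c).1 : Fin (r+1)) : ℕ)) :
    (kchi x h c).2 ⟨i, hi⟩ = if hx : i < (x.1:ℕ) then x.2 ⟨i, hx⟩ else c := rfl

lemma kv_ext {x y : BVertex (fun _ => k) r} (h1 : (x.1:ℕ) = (y.1:ℕ))
    (h2 : ∀ (i : ℕ) (hx : i < (x.1:ℕ)) (hy : i < (y.1:ℕ)), x.2 ⟨i, hx⟩ = y.2 ⟨i, hy⟩) :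
    x = y := by
  obtain ⟨⟨m, hm⟩, f⟩ := x
  obtain ⟨⟨n, hn⟩, g⟩ := y
  dsimp at h1 h2
  subst h1
  refine Sigma.ext rfl (heq_of_eq (funext fun i => ?_))
  have := h2 i i.isLt i.isLt
  simpa using this

lemma bext_iff {x y : BVertex (fun _ => k) r} :
    BExt x y ↔ ((y.1:ℕ) = (x.1:ℕ) + 1 ∧
      ∀ (i : ℕ) (h1 : i < (x.1:ℕ)) (h2 : i < (y.1:ℕ)), y.2 ⟨i, h2⟩ = x.2 ⟨i, h1⟩) := by
  constructor
  · rintro ⟨he, hf⟩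
    exact ⟨he, fun i h1 h2 => hf ⟨i, h1⟩⟩
  · rintro ⟨he, hf⟩
    exact ⟨he, fun i => hf i i.isLt (by have := i.isLt; omega)⟩

lemma bext_child {x y : BVertex (fun _ => k) r} :
    BExt x y ↔ ∃ (h : (x.1:ℕ) < r) (c : Fin k), y = kchi x h c := by
  rw [bext_iff]
  constructor
  · rintro ⟨he, hf⟩
    have hx : (x.1:ℕ) < r := by have := y.1.isLt; omega
    refine ⟨hx, y.2 ⟨(x.1:ℕ), by omega⟩, kv_ext (by simp [he]) ?_⟩
    intro i hiy hic
    rw [kchi_snd]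
    by_cases hi : i < (x.1:ℕ)
    · rw [dif_pos hi, hf i hi hiy]
    · rw [dif_neg hi]
      have : i = (x.1:ℕ) := by omega
      subst this
      rfl
  · rintro ⟨hx, c, rfl⟩
    refine ⟨by simp, fun i h1 h2 => ?_⟩
    rw [kchi_snd, dif_pos h1]

lemma bext_parent {x y : BVertex (fun _ => k) r} :
    BExt y x ↔ ∃ (_h : 0 < (x.1:ℕ)), y = kpar x _h := by
  rw [bext_iff]
  constructor
  · rintro ⟨he, hf⟩
    have hx : 0 < (x.1:ℕ) := by omega
    refine ⟨hx, kv_ext (by simp; omega) ?_⟩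
    intro i hiy hip
    rw [kpar_snd x hx i hip (by simp at hip; omega)]
    exact (hf i hiy (by omega)).symm
  · rintro ⟨hx, rfl⟩
    refine ⟨by simp; omega, fun i h1 h2 => ?_⟩
    rw [kpar_snd x hx i h1 (by omega)]

lemma kchi_inj (x : BVertex (fun _ => k) r) (h : (x.1:ℕ) < r) :
    Function.Injective (kchi x h) := by
  intro c c' hcc
  have h4 := congrFun (eq_of_heq (Sigma.ext_iff.mp hcc).2)
    (⟨(x.1:ℕ), by simp⟩ : Fin (((kchi x h c).1 : Fin (r+1)) : ℕ))
  have h5 := (kchi_snd x h c (x.1:ℕ) (by simp)).symm.trans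
    (h4.trans (kchi_snd x h c' (x.1:ℕ) (by simp)))
  rw [dif_neg (lt_irrefl _), dif_neg (lt_irrefl _)] at h5
  exact h5

open Finset in
lemma mulVec_apply (g : BVertex (fun _ => k) r → ℝ) (x : BVertex (fun _ => k) r) :
    (BAdjMatrix (fun _ => k) r).mulVec g x =
      (if h : 0 < (x.1:ℕ) then g (kpar x h) else 0) +
      (if h : (x.1:ℕ) < r then ∑ c : Fin k, g (kchi x h c) else 0) := by
  classical
  have hA : ∀ y, BAdjMatrix (fun _ => k) r x y * g y =
      (if BExt y x then g y else 0) + (if BExt x y then g y else 0) := by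
    intro y
    have hne : ¬ (BExt y x ∧ BExt x y) := by
      rintro ⟨⟨h1, -⟩, ⟨h2, -⟩⟩; omega
    by_cases h1 : BExt y x <;> by_cases h2 : BExt x y <;>
      simp [BAdjMatrix, BAdj, h1, h2] <;> tauto
  have hmv : (BAdjMatrix (fun _ => k) r).mulVec g x
      = ∑ y, BAdjMatrix (fun _ => k) r x y * g y := rfl
  rw [hmv]
  simp only [hA, Finset.sum_add_distrib]
  congr 1
  · by_cases hx : 0 < (x.1:ℕ)
    · rw [dif_pos hx]
      have heq : ∀ y : BVertex (fun _ => k) r, BExt y x ↔ y = kpar x hx := by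
        intro y
        rw [bext_parent]
        exact ⟨fun ⟨_, hy⟩ => hy, fun hy => ⟨hx, hy⟩⟩
      simp only [heq]
      simp
    · rw [dif_neg hx]
      have heq : ∀ y : BVertex (fun _ => k) r, ¬ BExt y x := fun y hy =>
        hx (bext_parent.mp hy).1
      simp [heq]
  · by_cases hx : (x.1:ℕ) < r
    · rw [dif_pos hx]
      have heq : ∀ y : BVertex (fun _ => k) r,
          BExt x y ↔ y ∈ Finset.image (kchi x hx) Finset.univ := by
        intro y
        rw [bext_child]
        simp only [Finset.mem_image, Finset.mem_univ, true_and]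
        constructor
        · rintro ⟨h, c, rfl⟩; exact ⟨c, rfl⟩
        · rintro ⟨c, rfl⟩; exact ⟨hx, c, rfl⟩
      simp only [heq]
      rw [Finset.sum_ite_mem, Finset.univ_inter, Finset.sum_image
        (fun a _ b _ hab => kchi_inj x hx hab)]
    · rw [dif_neg hx]
      have heq : ∀ y : BVertex (fun _ => k) r, ¬ BExt x y := fun y hy =>
        hx (bext_child.mp hy).1
      simp [heq]

end Aux

section Lift
variable {k r d : ℕ}

def sgn (k : ℕ) (c : Fin k) : ℝ :=
  if (c:ℕ) = 0 then 1 else if (c:ℕ) = 1 then -1 else 0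

lemma sgn_sum (hk : 2 ≤ k) : ∑ c : Fin k, sgn k c = 0 := by
  classical
  have hrw : ∀ c : Fin k, sgn k c =
      (if c = ⟨0, by omega⟩ then (1:ℝ) else 0) + (if c = ⟨1, by omega⟩ then (-1:ℝ) else 0) := by
    intro c
    by_cases h0 : (c:ℕ) = 0 <;> by_cases h1 : (c:ℕ) = 1 <;>
      simp [sgn, Fin.ext_iff, h0, h1] <;> omega
  rw [Finset.sum_congr rfl fun c _ => hrw c, Finset.sum_add_distrib]
  rw [Finset.sum_ite_eq' Finset.univ, Finset.sum_ite_eq' Finset.univ]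
  simp

/-- letters before position `d-1` are all zero -/
def QOK (d : ℕ) {k r' : ℕ} (x : BVertex (fun _ => k) r') : Prop :=
  ∀ (i : ℕ) (hi : i < (x.1:ℕ)), i + 1 < d → ((x.2 ⟨i, hi⟩ : Fin k) : ℕ) = 0

def tailv (k r d : ℕ) (x : BVertex (fun _ => k) (r + d)) (h : d ≤ (x.1:ℕ)) :
    BVertex (fun _ => k) r :=
  ⟨⟨(x.1:ℕ) - d, by have := x.1.isLt; omega⟩,
    fun i => x.2 ⟨d + (i:ℕ), by have h2 : (i:ℕ) < (x.1:ℕ) - d := i.isLt; omega⟩⟩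

@[simp] lemma tailv_fst (x : BVertex (fun _ => k) (r + d)) (h : d ≤ (x.1:ℕ)) :
    (((tailv k r d x h).1 : Fin (r+1)) : ℕ) = (x.1:ℕ) - d := rfl

lemma tailv_snd (x : BVertex (fun _ => k) (r + d)) (h : d ≤ (x.1:ℕ)) (i : ℕ)
    (hi : i < (((tailv k r d x h).1 : Fin (r+1)) : ℕ)) (hi' : d + i < (x.1:ℕ)) :
    (tailv k r d x h).2 ⟨i, hi⟩ = x.2 ⟨d + i, hi'⟩ := rfl

open Classical in
noncomputable def liftVec (k r d : ℕ) (hd : 1 ≤ d) (v : BVertex (fun _ => k) r → ℝ) :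
    BVertex (fun _ => k) (r + d) → ℝ := fun x =>
  if h : d ≤ (x.1:ℕ) ∧ QOK d x then
    sgn k (x.2 ⟨d - 1, by have := h.1; omega⟩) * v (tailv k r d x h.1)
  else 0

lemma liftVec_pos (hd : 1 ≤ d) (v : BVertex (fun _ => k) r → ℝ)
    (x : BVertex (fun _ => k) (r + d)) (h1 : d ≤ (x.1:ℕ)) (h2 : QOK d x)
    (hi : d - 1 < (x.1:ℕ)) :
    liftVec k r d hd v x = sgn k (x.2 ⟨d - 1, hi⟩) * v (tailv k r d x h1) := by
  rw [liftVec, dif_pos ⟨h1, h2⟩]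

lemma liftVec_neg (hd : 1 ≤ d) (v : BVertex (fun _ => k) r → ℝ)
    (x : BVertex (fun _ => k) (r + d)) (h : ¬ (d ≤ (x.1:ℕ) ∧ QOK d x)) :
    liftVec k r d hd v x = 0 := by
  rw [liftVec, dif_neg h]

lemma tailv_kpar (x : BVertex (fun _ => k) (r + d)) (h0 : 0 < (x.1:ℕ))
    (ha : d ≤ (((kpar x h0).1 : Fin (r+d+1)) : ℕ)) (hb : d ≤ (x.1:ℕ))
    (hc : 0 < (((tailv k r d x hb).1 : Fin (r+1)) : ℕ)) :
    tailv k r d (kpar x h0) ha = kpar (tailv k r d x hb) hc := by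
  refine kv_ext (by simp; omega) ?_
  intro i hx' hy'
  have hx2 : i < (((kpar x h0).1 : Fin (r+d+1)) : ℕ) - d := hx'
  have hdi : d + i < (((kpar x h0).1 : Fin (r+d+1)) : ℕ) := by simp at hx2 ⊢; omega
  rw [tailv_snd _ _ _ _ hdi]
  rw [kpar_snd x h0 (d+i) hdi (by simp at hdi; omega)]
  have hy2 : i < (((tailv k r d x hb).1 : Fin (r+1)) : ℕ) - 1 := hy'
  rw [kpar_snd _ hc i hy' (by simp at hy2 ⊢; omega)]
  rw [tailv_snd x hb i (by simp at hy2 ⊢; omega) (by simp at hy2; omega)]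

lemma tailv_kchi (x : BVertex (fun _ => k) (r + d)) (hx : (x.1:ℕ) < r + d) (c : Fin k)
    (ha : d ≤ (((kchi x hx c).1 : Fin (r+d+1)) : ℕ)) (hb : d ≤ (x.1:ℕ))
    (hc : (((tailv k r d x hb).1 : Fin (r+1)) : ℕ) < r) :
    tailv k r d (kchi x hx c) ha = kchi (tailv k r d x hb) hc c := by
  refine kv_ext (by simp; omega) ?_
  intro i hx' hy'
  have hx2 : i < (((kchi x hx c).1 : Fin (r+d+1)) : ℕ) - d := hx'
  have hdi : d + i < (((kchi x hx c).1 : Fin (r+d+1)) : ℕ) := by simp at hx2 ⊢; omega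
  rw [tailv_snd _ _ _ _ hdi, kchi_snd x hx c (d+i) hdi]
  have hy2 : i < (((tailv k r d x hb).1 : Fin (r+1)) : ℕ) + 1 := hy'
  rw [kchi_snd _ hc c i hy']
  by_cases hlt : i < (((tailv k r d x hb).1 : Fin (r+1)) : ℕ)
  · rw [dif_pos hlt, dif_pos (by simp at hlt ⊢; omega)]
    rw [tailv_snd x hb i hlt (by simp at hlt; omega)]
  · rw [dif_neg hlt, dif_neg (by simp at hlt ⊢; omega)]

end Lift

section Main
variable {k r d : ℕ}

lemma lift_eigen (hk : 2 ≤ k) (hd : 1 ≤ d) (lam : ℝ)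
    (v : BVertex (fun _ => k) r → ℝ)
    (hv : (BAdjMatrix (fun _ => k) r).mulVec v = lam • v) :
    (BAdjMatrix (fun _ => k) (r + d)).mulVec (liftVec k r d hd v) =
      lam • liftVec k r d hd v := by
  funext x
  rw [mulVec_apply, Pi.smul_apply, smul_eq_mul]
  rcases Nat.lt_or_ge (x.1:ℕ) d with hn | hn
  · -- depth < d
    rw [liftVec_neg hd v x (by rintro ⟨h1, -⟩; omega), mul_zero]
    have hpar : (if h : 0 < (x.1:ℕ) then liftVec k r d hd v (kpar x h) else 0) = 0 := by
      split_ifs with h0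
      · exact liftVec_neg hd v _ (by rintro ⟨h1, -⟩; simp at h1; omega)
      · rfl
    rw [hpar, zero_add]
    split_ifs with hcx
    · rcases Nat.lt_or_ge ((x.1:ℕ) + 1) d with hn1 | hn1
      · have hz : ∀ c : Fin k, liftVec k r d hd v (kchi x hcx c) = 0 := fun c =>
          liftVec_neg hd v _ (by rintro ⟨h1, -⟩; simp at h1; omega)
        simp [hz]
      · have hnd : (x.1:ℕ) + 1 = d := by omega
        by_cases hz : ∀ (i : ℕ) (hi : i < (x.1:ℕ)), ((x.2 ⟨i, hi⟩ : Fin k) : ℕ) = 0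
        · -- all-zero prefix: signs cancel
          have hterm : ∀ c : Fin k,
              liftVec k r d hd v (kchi x hcx c) = sgn k c *
                v (⟨⟨0, by omega⟩, fun i => Fin.elim0 i⟩ : BVertex (fun _ => k) r) := by
            intro c
            have hac : d ≤ (((kchi x hcx c).1 : Fin (r+d+1)) : ℕ) := by simp; omega
            have hQc : QOK d (kchi x hcx c) := by
              intro i hi hlt
              rw [kchi_snd x hcx c i hi, dif_pos (by omega : i < (x.1:ℕ))]
              exact hz i _
            rw [liftVec_pos hd v _ hac hQc (by simp; omega)]
            have harg : ∀ pf : d - 1 < (((kchi x hcx c).1 : Fin (r+d+1)) : ℕ),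
                (kchi x hcx c).2 ⟨d-1, pf⟩ = c := fun pf => by
              rw [kchi_snd x hcx c (d-1) pf, dif_neg (by omega : ¬ (d-1 < (x.1:ℕ)))]
            rw [harg]
            congr 2
            refine kv_ext (by simp; omega) fun i hx' hy' => ?_
            exact (Nat.not_lt_zero i hy').elim
          rw [Finset.sum_congr rfl fun c _ => hterm c, ← Finset.sum_mul, sgn_sum hk,
            zero_mul]
        · push_neg at hz
          obtain ⟨i0, hi0, hz0⟩ := hz
          have hzc : ∀ c : Fin k, liftVec k r d hd v (kchi x hcx c) = 0 := by
            intro c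
            refine liftVec_neg hd v _ ?_
            rintro ⟨-, h2⟩
            have := h2 i0 (show i0 < (((kchi x hcx c).1 : Fin (r+d+1)) : ℕ) from
              (by omega : i0 < (x.1:ℕ) + 1)) (by omega)
            rw [kchi_snd x hcx c i0, dif_pos hi0] at this
            exact hz0 this
          simp [hzc]
    · rfl
  · -- depth ≥ d
    by_cases hQ : QOK d x
    · have hd1 : d - 1 < (x.1:ℕ) := by omega
      set u := tailv k r d x hn with hudef
      have hveq := congrFun hv u
      rw [mulVec_apply, Pi.smul_apply, smul_eq_mul] at hveq
      rw [liftVec_pos hd v x hn hQ hd1]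
      set s := sgn k (x.2 ⟨d - 1, hd1⟩) with hsdef
      have hparent : (if h : 0 < (x.1:ℕ) then liftVec k r d hd v (kpar x h) else 0)
          = s * (if h : 0 < ((u.1 : Fin (r+1)) : ℕ) then v (kpar u h) else 0) := by
        have h0 : 0 < (x.1:ℕ) := by omega
        rw [dif_pos h0]
        rcases Nat.lt_or_ge (x.1:ℕ) (d+1) with hxd | hxd
        · have hu0 : ¬ 0 < ((u.1 : Fin (r+1)) : ℕ) := by
            rw [hudef]; simp; omega
          rw [dif_neg hu0, mul_zero]
          exact liftVec_neg hd v _ (by rintro ⟨h1, -⟩; simp at h1; omega)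
        · have hu0 : 0 < ((u.1 : Fin (r+1)) : ℕ) := by rw [hudef]; simp; omega
          rw [dif_pos hu0]
          have hQp : QOK d (kpar x h0) := by
            intro i hi hlt
            rw [kpar_snd x h0 i hi (by simp at hi; omega)]
            exact hQ i _ hlt
          have hap : d ≤ (((kpar x h0).1 : Fin (r+d+1)) : ℕ) := by simp; omega
          rw [liftVec_pos hd v _ hap hQp (by simp; omega)]
          rw [tailv_kpar x h0 hap hn hu0]
          have harg : ∀ pf : d - 1 < (((kpar x h0).1 : Fin (r+d+1)) : ℕ),
              (kpar x h0).2 ⟨d-1, pf⟩ = x.2 ⟨d-1, hd1⟩ := fun pf =>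
            kpar_snd x h0 (d-1) pf hd1
          rw [harg, hsdef]
      have hchild : (if h : (x.1:ℕ) < r + d then ∑ c : Fin k, liftVec k r d hd v (kchi x h c) else 0)
          = s * (if h : ((u.1 : Fin (r+1)) : ℕ) < r then ∑ c : Fin k, v (kchi u h c) else 0) := by
        rcases Nat.lt_or_ge (x.1:ℕ) (r+d) with hxc | hxc
        · have huc : ((u.1 : Fin (r+1)) : ℕ) < r := by rw [hudef]; simp; omega
          rw [dif_pos hxc, dif_pos huc, Finset.mul_sum]
          refine Finset.sum_congr rfl fun c _ => ?_
          have hQc : QOK d (kchi x hxc c) := by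
            intro i hi hlt
            rw [kchi_snd x hxc c i hi, dif_pos (by omega : i < (x.1:ℕ))]
            exact hQ i _ hlt
          have hac : d ≤ (((kchi x hxc c).1 : Fin (r+d+1)) : ℕ) := by simp; omega
          rw [liftVec_pos hd v _ hac hQc (by simp; omega)]
          rw [tailv_kchi x hxc c hac hn huc]
          have harg : ∀ pf : d - 1 < (((kchi x hxc c).1 : Fin (r+d+1)) : ℕ),
              (kchi x hxc c).2 ⟨d-1, pf⟩ = x.2 ⟨d-1, hd1⟩ := fun pf => by
            rw [kchi_snd x hxc c (d-1) pf, dif_pos hd1]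
          rw [harg, hsdef]
        · rw [dif_neg (by omega), dif_neg (by rw [hudef]; simp; omega), mul_zero]
      rw [hparent, hchild, ← mul_add, hveq]
      ring
    · rw [QOK] at hQ
      push_neg at hQ
      obtain ⟨i0, hi0, hlt0, hz0⟩ := hQ
      rw [liftVec_neg hd v x (fun hc => absurd (hc.2 i0 hi0 hlt0) hz0), mul_zero]
      have hpar : (if h : 0 < (x.1:ℕ) then liftVec k r d hd v (kpar x h) else 0) = 0 := by
        rw [dif_pos (by omega : 0 < (x.1:ℕ))]
        refine liftVec_neg hd v _ ?_
        rintro ⟨h1, h2⟩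
        have h1' : d ≤ (x.1:ℕ) - 1 := h1
        have := h2 i0 (show i0 < (((kpar x (by omega)).1 : Fin (r+d+1)) : ℕ) from
          (by omega : i0 < (x.1:ℕ) - 1)) hlt0
        rw [kpar_snd x _ i0 _ hi0] at this
        exact hz0 this
      rw [hpar, zero_add]
      split_ifs with hcx
      · have hzc : ∀ c : Fin k, liftVec k r d hd v (kchi x hcx c) = 0 := by
          intro c
          refine liftVec_neg hd v _ ?_
          rintro ⟨-, h2⟩
          have := h2 i0 (show i0 < (((kchi x hcx c).1 : Fin (r+d+1)) : ℕ) from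
            (by omega : i0 < (x.1:ℕ) + 1)) hlt0
          rw [kchi_snd x hcx c i0, dif_pos hi0] at this
          exact hz0 this
        simp [hzc]
      · rfl

end Main

/-- For `k ≥ 2` and `1 ≤ r ≤ r'`, every eigenvalue of the adjacency
matrix of `X_r^k` is an eigenvalue of the adjacency matrix of `X_{r'}^k`. -/
theorem spectrum_nested (k r r' : ℕ) (hk : 2 ≤ k) (hr : 1 ≤ r) (hrr' : r ≤ r')
    (lam : ℝ) (h : IsAdjEigenvalue (fun _ => k) r lam) :
    IsAdjEigenvalue (fun _ => k) r' lam := by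
  obtain ⟨d, rfl⟩ : ∃ d, r' = r + d := ⟨r' - r, by omega⟩
  rcases Nat.eq_zero_or_pos d with hd | hd
  · subst hd; exact h
  · obtain ⟨v, hv0, hv⟩ := h
    have hk0 : 0 < k := by omega
    refine ⟨liftVec k r d hd v, ?_, lift_eigen hk hd lam v hv⟩
    obtain ⟨u, hu⟩ := Function.ne_iff.mp hv0
    intro hw0
    apply hu
    set X : BVertex (fun _ => k) (r + d) :=
      ⟨⟨d + (u.1:ℕ), by have := u.1.isLt; omega⟩,
        fun i => if _hlt : (i:ℕ) < d then ⟨0, hk0⟩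
          else u.2 ⟨(i:ℕ) - d, by have h2 : (i:ℕ) < d + (u.1:ℕ) := i.isLt; omega⟩⟩ with hXdef
    have hX1 : ((X.1 : Fin (r+d+1)) : ℕ) = d + (u.1:ℕ) := rfl
    have hXs : ∀ (i : ℕ) (hi : i < ((X.1 : Fin (r+d+1)) : ℕ)),
        X.2 ⟨i, hi⟩ = if _hlt : i < d then ⟨0, hk0⟩
          else u.2 ⟨i - d, by rw [hX1] at hi; omega⟩ := fun i hi => rfl
    have hQX : QOK d X := by
      intro i hi hlt
      rw [hXs i hi, dif_pos (by omega : i < d)]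
    have hdX : d ≤ ((X.1 : Fin (r+d+1)) : ℕ) := by rw [hX1]; omega
    have hXval : liftVec k r d hd v X = v u := by
      rw [liftVec_pos hd v X hdX hQX (by rw [hX1]; omega)]
      have harg : ∀ pf : d - 1 < ((X.1 : Fin (r+d+1)) : ℕ),
          X.2 ⟨d-1, pf⟩ = ⟨0, hk0⟩ := fun pf => by
        rw [hXs, dif_pos (by omega : d - 1 < d)]
      rw [harg]
      have hsgn : sgn k (⟨0, hk0⟩ : Fin k) = 1 := by simp [sgn]
      rw [hsgn, one_mul]
      congr 1
      refine kv_ext (by omega : d + (u.1:ℕ) - d = (u.1:ℕ)) fun i hx' hy' => ?_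
      rw [tailv_snd X hdX i hx' (show d + i < ((X.1 : Fin (r+d+1)) : ℕ) by rw [hX1]; omega)]
      rw [hXs, dif_neg (by omega : ¬ (d + i < d))]
      exact congrArg u.2 (Fin.ext (by omega : d + i - d = i))
    rw [← hXval]
    exact congrFun hw0 X
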